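/- arXiv:1707.03888 — 3 statements merged into one kernel-verified Lean document; each statement's English description precedes it below -/
import Mathlib

section
/- Let G and H be graphs with |V(G)| = n ≥ 2 and V(H) = {u_1, …, u_k}, and let q ≤ k be an integer such that {u_{k−q+1}, …, u_k} is an independent set in H. If F is a minor of the tree-like product T(G,H) and F is (k−q+1)-connected, then there exists a set X ⊆ V(F) with |X| ≤ k−q such that F − X is a minor of G. -/
open SimpleGraph

/-- `F` is a minor of `G`: branch decomposition formulation. -/
def IsMinor {α : Type*} {β : Type*} (F : SimpleGraph α) (G : SimpleGraph β) : Prop :=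
  ∃ f : α → Set β,
    (∀ a, (f a).Nonempty) ∧
    (∀ a, (G.induce (f a)).Connected) ∧
    (∀ a a', a ≠ a' → Disjoint (f a) (f a')) ∧
    ∀ ⦃a a'⦄, F.Adj a a' → ∃ x ∈ f a, ∃ y ∈ f a', G.Adj x y

/-- Planarity, via Wagner's characterization. -/
def IsPlanar {β : Type*} (G : SimpleGraph β) : Prop :=
  ¬ IsMinor (⊤ : SimpleGraph (Fin 5)) G ∧
  ¬ IsMinor (completeBipartiteGraph (Fin 3) (Fin 3)) G

/-- `G` is `t`-apex: deleting at most `t` vertices leaves a planar graph. -/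
def IsApex (t : ℕ) {β : Type*} (G : SimpleGraph β) : Prop :=
  ∃ X : Set β, X.Finite ∧ X.ncard ≤ t ∧ IsPlanar (G.induce Xᶜ)

/-- `G` is `k`-connected. -/
def IsKConnected (k : ℕ) {β : Type*} [Fintype β] (G : SimpleGraph β) : Prop :=
  k < Fintype.card β ∧
  ∀ X : Finset β, X.card < k → (G.induce ((↑X : Set β)ᶜ)).Connected

/-- Vertices of the tree-like product `T(G,H)`: a vertex of the copy `G_x`
is encoded by the path from the root to the non-leaf tree vertex `x`
(a sequence of vertices of `G` of length `< k`) together with a vertex of `G`. -/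
abbrev TPVert (V : Type*) (k : ℕ) : Type _ := (Σ i : Fin k, (Fin i → V)) × V

/-- The tree-like product `T(G,H)` of `G` with a graph `H` on the ordered
vertex set `Fin k`. -/
def treeProd {V : Type*} (G : SimpleGraph V) {k : ℕ} (H : SimpleGraph (Fin k)) :
    SimpleGraph (TPVert V k) :=
  SimpleGraph.fromRel (fun a b =>
    (a.1 = b.1 ∧ G.Adj a.2 b.2) ∨
    (∃ hij : (a.1.1 : ℕ) < (b.1.1 : ℕ),
      (∀ t : Fin a.1.1, a.1.2 t = b.1.2 ⟨t, t.2.trans hij⟩) ∧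
      a.2 = b.1.2 ⟨a.1.1, hij⟩ ∧
      H.Adj a.1.1 b.1.1))

/-- The `p`-blowup of a graph on `Fin m`, with the blowup classes consecutive. -/
def blowupFin {m : ℕ} (H0 : SimpleGraph (Fin m)) (p : ℕ) : SimpleGraph (Fin (m * p)) where
  Adj i j := ∃ (hi : (i : ℕ) / p < m) (hj : (j : ℕ) / p < m),
    H0.Adj ⟨(i : ℕ) / p, hi⟩ ⟨(j : ℕ) / p, hj⟩
  symm := by constructor; rintro i j ⟨hi, hj, h⟩; exact ⟨hj, hi, h.symm⟩
  loopless := by constructor; rintro i ⟨hi, hj, h⟩; exact H0.irrefl h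

/-- The strong `p`-blowup of a graph. -/
def strongBlowup {W : Type*} (H0 : SimpleGraph W) (p : ℕ) : SimpleGraph (W × Fin p) where
  Adj a b := H0.Adj a.1 b.1 ∨ (a.1 = b.1 ∧ a.2 ≠ b.2)
  symm := by
    constructor
    rintro a b (h | ⟨h1, h2⟩)
    · exact Or.inl h.symm
    · exact Or.inr ⟨h1.symm, h2.symm⟩
  loopless := by constructor; rintro a (h | ⟨_, h⟩); exact H0.irrefl h; exact h rfl

/-- An `(a : b)`-coloring of `G`. -/
def HasFracColoring {W : Type*} (G : SimpleGraph W) (a b : ℕ) : Prop :=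
  ∃ f : W → Finset (Fin a), (∀ w, (f w).card = b) ∧
    ∀ ⦃x y⦄, G.Adj x y → Disjoint (f x) (f y)

/-- The fractional chromatic number. -/
noncomputable def fracChrom {W : Type*} (G : SimpleGraph W) : ℝ :=
  sInf {q : ℝ | ∃ a b : ℕ, 0 < b ∧ HasFracColoring G a b ∧ q = (a : ℝ) / (b : ℝ)}

/-!
Let `f a₀` be a branch set whose least level `j` is as large as possible, and `z₀ ∈ f a₀` a vertex
at level `j`. If `j ≥ k - q`, then `f a₀` lies in the copy of `G` containing `z₀`, since `H` has no
edges among levels `≥ k - q`; otherwise it lies in the subtree below that copy. Either region is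
attached to the rest of `T(G,H)` only through at most `k - q` progenitors. Deleting the branch sets
that contain one of them leaves a connected graph, so all remaining branch sets stay in the region,
and each of them reaches the level of `z₀` (in the second case by the choice of `j`). Contracting
every vertex of the region onto its progenitor at that level then yields a model of `F - X` in one
copy of `G`.
-/

open Function

namespace SimpleGraph

variable {β γ : Type*} {Γ : SimpleGraph β} {Δ : SimpleGraph γ}

lemma Connected.exists_adj_mem_not_mem (hc : Γ.Connected) {s : Set β} {x y : β}
    (hx : x ∈ s) (hy : y ∉ s) : ∃ u ∈ s, ∃ v ∉ s, Γ.Adj u v := by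
  obtain ⟨d, -, hd, hd'⟩ := (hc.preconnected x y).some.exists_boundary_dart s hx hy
  exact ⟨_, hd, _, hd', d.adj⟩

lemma Connected.forall_mem_of_adj_mem (hc : Γ.Connected) {s : Set β} {x : β} (hx : x ∈ s)
    (hs : ∀ u ∈ s, ∀ v, Γ.Adj u v → v ∈ s) (y : β) : y ∈ s := by
  by_contra hy
  obtain ⟨u, hu, v, hv, huv⟩ := hc.exists_adj_mem_not_mem hx hy
  exact hv (hs u hu v huv)

lemma exists_adj_of_induce_connected {c s : Set β} (hc : (Γ.induce c).Connected) {x y : β}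
    (hxc : x ∈ c) (hxs : x ∈ s) (hyc : y ∈ c) (hys : y ∉ s) :
    ∃ u ∈ c, u ∈ s ∧ ∃ v ∈ c, v ∉ s ∧ Γ.Adj u v := by
  obtain ⟨u, hu, v, hv, huv⟩ :=
    hc.exists_adj_mem_not_mem (s := {z : c | (z : β) ∈ s}) (x := ⟨x, hxc⟩) (y := ⟨y, hyc⟩) hxs hys
  exact ⟨u, u.2, hu, v, v.2, hv, huv⟩

lemma subset_of_induce_connected {c s : Set β} (hc : (Γ.induce c).Connected) {x : β}
    (hxc : x ∈ c) (hxs : x ∈ s) (hs : ∀ u ∈ c, u ∈ s → ∀ v ∈ c, Γ.Adj u v → v ∈ s) : c ⊆ s := by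
  intro y hyc
  by_contra hys
  obtain ⟨u, huc, hus, v, hvc, hvs, huv⟩ := exists_adj_of_induce_connected hc hxc hxs hyc hys
  exact hvs (hs u huc hus v hvc huv)

lemma Connected.induce_image {s : Set β} (hc : (Γ.induce s).Connected) (φ : β → γ)
    (hφ : ∀ x ∈ s, ∀ y ∈ s, Γ.Adj x y → φ x = φ y ∨ Δ.Adj (φ x) (φ y)) :
    (Δ.induce (φ '' s)).Connected := by
  let ψ : s → φ '' s := fun x => ⟨φ x, x, x.2, rfl⟩
  have hreach : ∀ x y : s, (Γ.induce s).Walk x y → (Δ.induce (φ '' s)).Reachable (ψ x) (ψ y) := by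
    intro x y w
    induction w with
    | nil => rfl
    | @cons u v _ huv _ ih =>
      rcases hφ u u.2 v v.2 huv with h | h
      · rwa [show ψ u = ψ v from Subtype.ext h]
      · exact (Adj.reachable (G := Δ.induce (φ '' s)) (u := ψ u) (v := ψ v) h).trans ih
  have : Nonempty s := hc.nonempty
  refine (connected_iff _).2 ⟨?_, ⟨ψ (Classical.arbitrary s)⟩⟩
  rintro ⟨_, x, hx, rfl⟩ ⟨_, y, hy, rfl⟩
  exact hreach ⟨x, hx⟩ ⟨y, hy⟩ (hc.preconnected _ _).some

end SimpleGraph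

structure IsMinorModel {α β : Type*} (F : SimpleGraph α) (Γ : SimpleGraph β) (f : α → Set β) :
    Prop where
  connected : ∀ a, (Γ.induce (f a)).Connected
  disjoint : Pairwise (Disjoint on f)
  adj : ∀ ⦃a a'⦄, F.Adj a a' → ∃ x ∈ f a, ∃ y ∈ f a', Γ.Adj x y

lemma isMinor_iff_exists_isMinorModel {α β : Type*} {F : SimpleGraph α} {Γ : SimpleGraph β} :
    IsMinor F Γ ↔ ∃ f, IsMinorModel F Γ f :=
  ⟨fun ⟨f, _, hc, hd, ha⟩ => ⟨f, hc, fun _ _ h => hd _ _ h, ha⟩,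
    fun ⟨f, hc, hd, ha⟩ => ⟨f, fun a => Set.nonempty_coe_sort.1 (hc a).nonempty, hc,
      fun _ _ h => hd h, ha⟩⟩

lemma Set.ncard_setOf_inter_nonempty_le {ι β : Type*} {f : ι → Set β}
    (hf : Pairwise (Disjoint on f)) {A : Set β} (hA : A.Finite) :
    {i | (f i ∩ A).Nonempty}.ncard ≤ A.ncard := by
  have := hA.to_subtype
  choose g hg using fun i : {i | (f i ∩ A).Nonempty} => i.2
  rw [← Nat.card_coe_set_eq, ← Nat.card_coe_set_eq]
  refine Nat.card_le_card_of_injective (fun i => ⟨g i, (hg i).2⟩) fun i i' h => Subtype.ext ?_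
  have hgi : g i = g i' := congrArg Subtype.val h
  by_contra hne
  exact Set.disjoint_left.1 (hf hne) (hg i).1 (hgi ▸ (hg i').1)

namespace IsMinorModel

variable {α β γ : Type*} {F : SimpleGraph α} {Γ : SimpleGraph β} {f : α → Set β}

lemma nonempty (hf : IsMinorModel F Γ f) (a : α) : (f a).Nonempty :=
  Set.nonempty_coe_sort.1 (hf.connected a).nonempty

lemma induce (hf : IsMinorModel F Γ f) (s : Set α) :
    IsMinorModel (F.induce s) Γ (fun a => f a) :=
  ⟨fun a => hf.connected a, fun _ _ h => hf.disjoint (Subtype.coe_ne_coe.2 h),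
    fun _ _ h => hf.adj h⟩

lemma isMinor_of_map {Δ : SimpleGraph γ} (hf : IsMinorModel F Γ f) {s : Set β}
    (hfs : ∀ a, f a ⊆ s) (φ : β → γ)
    (hφ : ∀ x ∈ s, ∀ y ∈ s, Γ.Adj x y → φ x = φ y ∨ Δ.Adj (φ x) (φ y))
    (hdisj : Pairwise (Disjoint on fun a => φ '' f a)) : IsMinor F Δ := by
  refine isMinor_iff_exists_isMinorModel.2 ⟨fun a => φ '' f a,
    fun a => (hf.connected a).induce_image φ fun x hx y hy => hφ x (hfs a hx) y (hfs a hy),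
    hdisj, fun a a' haa' => ?_⟩
  obtain ⟨x, hx, y, hy, hxy⟩ := hf.adj haa'
  refine ⟨φ x, Set.mem_image_of_mem φ hx, φ y, Set.mem_image_of_mem φ hy,
    (hφ x (hfs a hx) y (hfs a' hy) hxy).resolve_left fun h => ?_⟩
  exact Set.disjoint_left.1 (hdisj haa'.ne) (Set.mem_image_of_mem φ hx)
    (h ▸ Set.mem_image_of_mem φ hy)

/-- `X` consists of the branch sets meeting `A`. The remaining ones can cross from `s` to its
complement neither inside a branch set nor along an edge of the connected graph `F - X`. -/
lemma exists_finset_forall_subset [Fintype α] (hf : IsMinorModel F Γ f) {j : ℕ}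
    (hconn : ∀ X : Finset α, X.card ≤ j → (F.induce (X : Set α)ᶜ).Connected)
    {s A : Set β} (hA : A.Finite) (hAj : A.ncard ≤ j) (hsA : Disjoint s A)
    (hbdry : ∀ x ∈ s, ∀ y, Γ.Adj x y → y ∈ s ∨ y ∈ A) {a₀ : α} (ha₀ : f a₀ ⊆ s) :
    ∃ X : Finset α, X.card ≤ j ∧ ∀ a ∉ X, f a ⊆ s := by
  classical
  set X : Finset α := {a | (f a ∩ A).Nonempty}
  have hX : ∀ a ∉ X, ∀ x ∈ f a, x ∉ A := fun a ha x hx hxA =>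
    ha (Finset.mem_filter.2 ⟨Finset.mem_univ a, x, hx, hxA⟩)
  have hXj : X.card ≤ j := by
    have : (X : Set α) = {a | (f a ∩ A).Nonempty} := by ext; simp [X]
    rw [← Set.ncard_coe_finset, this]
    exact (Set.ncard_setOf_inter_nonempty_le hf.disjoint hA).trans hAj
  have hspread : ∀ a ∉ X, ∀ x ∈ f a, x ∈ s → f a ⊆ s := fun a ha x hx hxs =>
    subset_of_induce_connected (hf.connected a) hx hxs fun u _ hus v hv huv =>
      (hbdry u hus v huv).resolve_right (hX a ha v hv)
  have ha₀X : a₀ ∉ X := fun h => by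
    obtain ⟨x, hx, hxA⟩ := (Finset.mem_filter.1 h).2
    exact Set.disjoint_left.1 hsA (ha₀ hx) hxA
  refine ⟨X, hXj, fun a ha => ?_⟩
  refine (hconn X hXj).forall_mem_of_adj_mem (s := {b | f b ⊆ s}) (x := ⟨a₀, ha₀X⟩) ha₀
    (fun b hb b' hbb' => ?_) ⟨a, ha⟩
  obtain ⟨x, hx, y, hy, hxy⟩ := hf.adj hbb'
  exact hspread b' b'.2 y hy ((hbdry x (hb hx) y hxy).resolve_right (hX b' b'.2 y hy))

end IsMinorModel

namespace TPVert

variable {V : Type*} {k : ℕ}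

def level (z : TPVert V k) : ℕ := z.1.1

/-- The address of the copy of `G` containing `z`, followed by `z.2` itself at position
`z.level` (and, as padding, at every later position). -/
def path (z : TPVert V k) (t : ℕ) : V := if h : t < z.level then z.1.2 ⟨t, h⟩ else z.2

lemma path_of_lt {z : TPVert V k} {t : ℕ} (h : t < z.level) : z.path t = z.1.2 ⟨t, h⟩ :=
  dif_pos h

lemma path_of_le {z : TPVert V k} {t : ℕ} (h : z.level ≤ t) : z.path t = z.2 :=
  dif_neg h.not_gt

lemma ext_of_path {z z' : TPVert V k} (hlev : z.level = z'.level)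
    (hpath : ∀ t ≤ z.level, z.path t = z'.path t) : z = z' := by
  obtain ⟨⟨i, p⟩, v⟩ := z
  obtain ⟨⟨i', p'⟩, v'⟩ := z'
  obtain rfl : i = i' := Fin.ext hlev
  obtain rfl : p = p' := funext fun t => by
    have h := hpath t t.2.le
    rwa [path_of_lt (z := (⟨i, p⟩, v)) t.2, path_of_lt (z := (⟨i, p'⟩, v')) t.2] at h
  obtain rfl : v = v' := by
    have h := hpath i le_rfl
    rwa [path_of_le (z := (⟨i, p⟩, v)) (t := i) le_rfl,
      path_of_le (z := (⟨i, p⟩, v')) (t := i) le_rfl] at h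
  rfl

lemma level_eq_of_fst_eq {z z' : TPVert V k} (h : z.1 = z'.1) : z.level = z'.level :=
  congrArg (fun x => (x.1 : ℕ)) h

lemma path_eq_of_fst_eq {z z' : TPVert V k} (h : z.1 = z'.1) {t : ℕ} (ht : t < z.level) :
    z.path t = z'.path t := by
  obtain ⟨⟨i, p⟩, v⟩ := z
  obtain ⟨⟨i', p'⟩, v'⟩ := z'
  cases h
  exact (path_of_lt ht).trans (path_of_lt (z := (⟨i, p⟩, v')) ht).symm

def IsProgenitor (a b : TPVert V k) : Prop :=
  a.level < b.level ∧ ∀ t ≤ a.level, a.path t = b.path t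

/-- The vertices in the subtree below the copy of `G` at level `j` with address `p`. -/
def subtree (j : ℕ) (p : ℕ → V) : Set (TPVert V k) :=
  {z | j ≤ z.level ∧ ∀ t < j, z.path t = p t}

/-- The progenitors of the copy of `G` at level `j` with address `p`. -/
def ancestors (j : ℕ) (p : ℕ → V) : Set (TPVert V k) :=
  {z | z.level < j ∧ ∀ t ≤ z.level, z.path t = p t}

lemma subtree_anti {j j' : ℕ} (h : j ≤ j') (p : ℕ → V) :
    (subtree j' p : Set (TPVert V k)) ⊆ subtree j p :=
  fun _ hz => ⟨h.trans hz.1, fun t ht => hz.2 t (ht.trans_le h)⟩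

lemma setOf_fst_eq_subset_subtree (z₀ : TPVert V k) :
    {z | z.1 = z₀.1} ⊆ subtree z₀.level z₀.path :=
  fun _ hz => ⟨(level_eq_of_fst_eq hz).ge, fun _ ht =>
    path_eq_of_fst_eq hz (ht.trans_eq (level_eq_of_fst_eq hz).symm)⟩

lemma eq_of_mem_subtree {j : ℕ} {p : ℕ → V} {z z' : TPVert V k} (hz : z ∈ subtree j p)
    (hz' : z' ∈ subtree j p) (hlev : z.level = j) (hlev' : z'.level = j)
    (hpath : z.path j = z'.path j) : z = z' := by
  refine ext_of_path (hlev.trans hlev'.symm) fun t ht => ?_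
  rcases (ht.trans_eq hlev).lt_or_eq with ht | rfl
  · exact (hz.2 t ht).trans (hz'.2 t ht).symm
  · exact hpath

lemma disjoint_subtree_ancestors (j : ℕ) (p : ℕ → V) :
    Disjoint (subtree j p : Set (TPVert V k)) (ancestors j p) :=
  Set.disjoint_left.2 fun _ hs ha => ha.1.not_ge hs.1

lemma injOn_level_ancestors (j : ℕ) (p : ℕ → V) :
    Set.InjOn level (ancestors j p : Set (TPVert V k)) :=
  fun _ ha _ hb h => ext_of_path h fun t ht => (ha.2 t ht).trans (hb.2 t (h ▸ ht)).symm

lemma mapsTo_level_ancestors (j : ℕ) (p : ℕ → V) :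
    Set.MapsTo level (ancestors j p : Set (TPVert V k)) (Finset.range j : Set ℕ) :=
  fun _ ha => Finset.mem_coe.2 (Finset.mem_range.2 ha.1)

lemma ancestors_finite (j : ℕ) (p : ℕ → V) : (ancestors j p : Set (TPVert V k)).Finite :=
  Set.Finite.of_finite_image ((Finset.range j).finite_toSet.subset
    (mapsTo_level_ancestors j p).image_subset) (injOn_level_ancestors j p)

lemma ncard_ancestors_le (j : ℕ) (p : ℕ → V) : (ancestors j p : Set (TPVert V k)).ncard ≤ j := by
  simpa using Set.ncard_le_ncard_of_injOn level (mapsTo_level_ancestors j p)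
    (injOn_level_ancestors j p) (Finset.range j).finite_toSet

noncomputable def minLevel (s : Set (TPVert V k)) : ℕ := sInf (level '' s)

lemma minLevel_le {s : Set (TPVert V k)} {z : TPVert V k} (hz : z ∈ s) : minLevel s ≤ z.level :=
  Nat.sInf_le ⟨z, hz, rfl⟩

lemma exists_level_eq_minLevel {s : Set (TPVert V k)} (hs : s.Nonempty) :
    ∃ z ∈ s, z.level = minLevel s :=
  Nat.sInf_mem (hs.image level)

end TPVert

open TPVert

section treeProd

variable {V : Type*} {k : ℕ} {G : SimpleGraph V} {H : SimpleGraph (Fin k)}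

lemma treeProd_adj_cases {a b : TPVert V k} (hab : (treeProd G H).Adj a b) :
    (a.1 = b.1 ∧ G.Adj a.2 b.2) ∨ (IsProgenitor a b ∧ H.Adj a.1.1 b.1.1) ∨
      (IsProgenitor b a ∧ H.Adj b.1.1 a.1.1) := by
  have hprog : ∀ x y : TPVert V k, ∀ hxy : x.level < y.level,
      (∀ t : Fin x.1.1, x.1.2 t = y.1.2 ⟨t, t.2.trans hxy⟩) → x.2 = y.1.2 ⟨x.1.1, hxy⟩ →
      IsProgenitor x y := by
    intro x y hxy hpre hlast
    refine ⟨hxy, fun t ht => ?_⟩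
    rcases ht.lt_or_eq with ht | rfl
    · rw [path_of_lt ht, path_of_lt (ht.trans hxy)]
      exact hpre ⟨t, ht⟩
    · rw [path_of_le le_rfl, path_of_lt hxy]
      exact hlast
  rw [treeProd, fromRel_adj] at hab
  rcases hab.2 with (h | ⟨hxy, hpre, hlast, hH⟩) | (h | ⟨hxy, hpre, hlast, hH⟩)
  · exact .inl h
  · exact .inr (.inl ⟨hprog a b hxy hpre hlast, hH⟩)
  · exact .inl ⟨h.1.symm, h.2.symm⟩
  · exact .inr (.inr ⟨hprog b a hxy hpre hlast, hH⟩)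

lemma treeProd_path_eq_of_adj {a b : TPVert V k} (hab : (treeProd G H).Adj a b) {t : ℕ}
    (hta : t ≤ a.level) (htb : t < b.level) : a.path t = b.path t := by
  rcases treeProd_adj_cases hab with ⟨h, -⟩ | ⟨h, -⟩ | ⟨h, -⟩
  · exact path_eq_of_fst_eq h (htb.trans_eq (level_eq_of_fst_eq h).symm)
  · exact h.2 t hta
  · exact (h.2 t htb.le).symm

lemma treeProd_fst_eq_of_adj {m : ℕ} (hH : ∀ i j : Fin k, m ≤ (i : ℕ) → m ≤ (j : ℕ) → ¬ H.Adj i j)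
    {a b : TPVert V k} (ha : m ≤ a.level) (hb : m ≤ b.level) (hab : (treeProd G H).Adj a b) :
    a.1 = b.1 ∧ G.Adj a.2 b.2 := by
  rcases treeProd_adj_cases hab with h | ⟨-, h⟩ | ⟨-, h⟩
  · exact h
  · exact absurd h (hH _ _ ha hb)
  · exact absurd h (hH _ _ hb ha)

lemma treeProd_mem_subtree_or_mem_ancestors {j : ℕ} {p : ℕ → V} {a b : TPVert V k}
    (ha : a ∈ subtree j p) (hab : (treeProd G H).Adj a b) :
    b ∈ subtree j p ∨ b ∈ ancestors j p := by
  rcases le_or_gt j b.level with hb | hb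
  · exact .inl ⟨hb, fun t ht =>
      (treeProd_path_eq_of_adj hab (ht.trans_le ha.1).le (ht.trans_le hb)).symm.trans (ha.2 t ht)⟩
  · exact .inr ⟨hb, fun t ht =>
      (treeProd_path_eq_of_adj hab.symm ht ((ht.trans_lt hb).trans_le ha.1)).trans
        (ha.2 t (ht.trans_lt hb))⟩

lemma treeProd_fst_eq_or_mem_ancestors {m : ℕ}
    (hH : ∀ i j : Fin k, m ≤ (i : ℕ) → m ≤ (j : ℕ) → ¬ H.Adj i j) {z₀ a b : TPVert V k}
    (hm : m ≤ z₀.level) (ha : a.1 = z₀.1) (hab : (treeProd G H).Adj a b) :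
    b.1 = z₀.1 ∨ b ∈ ancestors m z₀.path := by
  have ha' : a ∈ subtree m z₀.path :=
    subtree_anti hm _ (setOf_fst_eq_subset_subtree z₀ ha)
  refine (treeProd_mem_subtree_or_mem_ancestors ha' hab).imp_left fun hb => ?_
  exact (treeProd_fst_eq_of_adj hH ha'.1 hb.1 hab).1.symm.trans ha

lemma subset_subtree_of_induce_connected {c : Set (TPVert V k)}
    (hc : ((treeProd G H).induce c).Connected) {j : ℕ} (hcj : ∀ z ∈ c, j ≤ z.level)
    {z₀ : TPVert V k} (hz₀ : z₀ ∈ c) : c ⊆ subtree j z₀.path :=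
  subset_of_induce_connected hc hz₀ ⟨hcj z₀ hz₀, fun _ _ => rfl⟩ fun u hu hus v hv huv =>
    ⟨hcj v hv, fun t ht => (treeProd_path_eq_of_adj huv (ht.trans_le (hcj u hu)).le
      (ht.trans_le (hcj v hv))).symm.trans (hus.2 t ht)⟩

lemma exists_mem_level_eq_path_eq {c : Set (TPVert V k)}
    (hc : ((treeProd G H).induce c).Connected) {j : ℕ} (hcj : ∀ z ∈ c, j ≤ z.level)
    {y : TPVert V k} (hy : y ∈ c) (hyj : y.level = j) {z : TPVert V k} (hz : z ∈ c) :
    ∃ z' ∈ c, z'.level = j ∧ z'.path j = z.path j := by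
  rcases (hcj z hz).eq_or_lt with hzj | hzj
  · exact ⟨z, hz, hzj.symm, rfl⟩
  -- the subtree below the progenitor of `z` at level `j` can only be left through it
  obtain ⟨u, -, hu, v, hv, hvs, huv⟩ := exists_adj_of_induce_connected hc hz
    (show z ∈ subtree (j + 1) z.path from ⟨hzj, fun _ _ => rfl⟩) hy
    fun h => Nat.not_succ_le_self j (hyj ▸ h.1)
  obtain ⟨hvlev, hvpath⟩ := (treeProd_mem_subtree_or_mem_ancestors hu huv).resolve_left hvs
  have hvj : v.level = j := le_antisymm (Nat.le_of_lt_succ hvlev) (hcj v hv)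
  exact ⟨v, hv, hvj, hvpath j hvj.ge⟩

lemma treeProd_path_eq_or_adj {j : ℕ} {a b : TPVert V k} (ha : j ≤ a.level) (hb : j ≤ b.level)
    (hab : (treeProd G H).Adj a b) : a.path j = b.path j ∨ G.Adj (a.path j) (b.path j) := by
  rcases hb.lt_or_eq with hb | hb
  · exact .inl (treeProd_path_eq_of_adj hab ha hb)
  rcases ha.lt_or_eq with ha | ha
  · exact .inl (treeProd_path_eq_of_adj hab.symm hb.le ha).symm
  rcases treeProd_adj_cases hab with ⟨-, h⟩ | ⟨h, -⟩ | ⟨h, -⟩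
  · rw [path_of_le ha.ge, path_of_le hb.ge]
    exact .inr h
  · exact absurd h.1 (ha.symm.trans hb).not_lt
  · exact absurd h.1 (hb.symm.trans ha).not_lt

/-- Contract every vertex of the subtree onto its progenitor at level `j`, a vertex of a single
copy of `G`. -/
lemma IsMinorModel.isMinor_of_subset_subtree {W : Type*} {F : SimpleGraph W}
    {f : W → Set (TPVert V k)} (hf : IsMinorModel F (treeProd G H) f) {j : ℕ} {p : ℕ → V}
    (hsub : ∀ a, f a ⊆ subtree j p) (hlev : ∀ a, ∃ z ∈ f a, z.level = j) : IsMinor F G := by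
  have hroot : ∀ a, ∀ z ∈ f a, ∃ z' ∈ f a, z'.level = j ∧ z'.path j = z.path j := fun a z hz =>
    have ⟨y, hy, hyj⟩ := hlev a
    exists_mem_level_eq_path_eq (hf.connected a) (fun z hz => (hsub a hz).1) hy hyj hz
  refine hf.isMinor_of_map hsub (fun z => z.path j)
    (fun x hx y hy hxy => treeProd_path_eq_or_adj hx.1 hy.1 hxy) fun a a' haa' => ?_
  refine Set.disjoint_left.2 ?_
  rintro _ ⟨z, hz, rfl⟩ ⟨z', hz', hzz'⟩
  obtain ⟨y, hy, hyj, hyz⟩ := hroot a z hz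
  obtain ⟨y', hy', hy'j, hy'z'⟩ := hroot a' z' hz'
  have : y' = y := eq_of_mem_subtree (hsub a' hy') (hsub a hy) hy'j hyj
    (hy'z'.trans (hzz'.trans hyz.symm))
  exact Set.disjoint_left.1 (hf.disjoint haa') hy (this ▸ hy')

end treeProd

theorem treeProd_connected_minor_general {V : Type}
    (G : SimpleGraph V) {k : ℕ} (H : SimpleGraph (Fin k))
    (q : ℕ)
    (hind : ∀ i j : Fin k, k - q ≤ (i : ℕ) → k - q ≤ (j : ℕ) → ¬ H.Adj i j)
    {W : Type} [Fintype W] (F : SimpleGraph W)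
    (hminor : IsMinor F (treeProd G H))
    (hconn : IsKConnected (k - q + 1) F) :
    ∃ X : Finset W, X.card ≤ k - q ∧ IsMinor (F.induce ((↑X : Set W)ᶜ)) G := by
  obtain ⟨f, hf⟩ := isMinor_iff_exists_isMinorModel.1 hminor
  have hsep : ∀ X : Finset W, X.card ≤ k - q → (F.induce (X : Set W)ᶜ).Connected :=
    fun X hX => hconn.2 X (Nat.lt_succ_of_le hX)
  have : Nonempty W := Fintype.card_pos_iff.1 (Nat.zero_lt_of_lt hconn.1)
  obtain ⟨a₀, ha₀⟩ := Finite.exists_max fun a => minLevel (f a)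
  obtain ⟨z₀, hz₀, hz₀lev⟩ := exists_level_eq_minLevel (hf.nonempty a₀)
  by_cases hdeep : k - q ≤ minLevel (f a₀)
  · have hcopy : f a₀ ⊆ {z | z.1 = z₀.1} :=
      subset_of_induce_connected (hf.connected a₀) hz₀ rfl fun u hu hu₀ v hv huv =>
        (treeProd_fst_eq_of_adj hind (hdeep.trans (minLevel_le hu))
          (hdeep.trans (minLevel_le hv)) huv).1.symm.trans hu₀
    have hm : k - q ≤ z₀.level := hz₀lev ▸ hdeep
    obtain ⟨X, hXcard, hX⟩ := hf.exists_finset_forall_subset hsep (ancestors_finite _ _)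
      (ncard_ancestors_le _ _) ((disjoint_subtree_ancestors _ _).mono_left
        ((setOf_fst_eq_subset_subtree z₀).trans (subtree_anti hm _)))
      (fun _ hx _ hxy => treeProd_fst_eq_or_mem_ancestors hind hm hx hxy) hcopy
    refine ⟨X, hXcard, (hf.induce _).isMinor_of_subset_subtree
      (fun a => (hX a a.2).trans (setOf_fst_eq_subset_subtree z₀)) fun a => ?_⟩
    obtain ⟨z, hz⟩ := hf.nonempty a
    exact ⟨z, hz, level_eq_of_fst_eq (hX a a.2 hz)⟩
  · obtain ⟨X, hXcard, hX⟩ := hf.exists_finset_forall_subset (j := minLevel (f a₀))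
      (fun X hX => hsep X (by omega)) (ancestors_finite _ _) (ncard_ancestors_le _ _)
      (disjoint_subtree_ancestors _ _)
      (fun _ hx _ hxy => treeProd_mem_subtree_or_mem_ancestors hx hxy)
      (subset_subtree_of_induce_connected (hf.connected a₀) (fun _ => minLevel_le) hz₀)
    refine ⟨X, by omega, (hf.induce _).isMinor_of_subset_subtree (fun a => hX a a.2) fun a => ?_⟩
    obtain ⟨z, hz, hzlev⟩ := exists_level_eq_minLevel (hf.nonempty a)
    exact ⟨z, hz, le_antisymm (hzlev.trans_le (ha₀ a)) (hX a a.2 hz).1⟩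

theorem treeProd_connected_minor {V : Type} [Fintype V] [DecidableEq V]
    (G : SimpleGraph V) {k : ℕ} (H : SimpleGraph (Fin k))
    (hn : 2 ≤ Fintype.card V)
    (q : ℕ) (hq : q ≤ k)
    (hind : ∀ i j : Fin k, k - q ≤ (i : ℕ) → k - q ≤ (j : ℕ) → ¬ H.Adj i j)
    {W : Type} [Fintype W] (F : SimpleGraph W)
    (hminor : IsMinor F (treeProd G H))
    (hconn : IsKConnected (k - q + 1) F) :
    ∃ X : Finset W, X.card ≤ k - q ∧ IsMinor (F.induce ((↑X : Set W)ᶜ)) G :=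
  treeProd_connected_minor_general G H q hind F hminor hconn
end

section
/- Let R be a graph with two distinct non-adjacent vertices u and v such that R is 3-colorable and every proper 3-coloring of R assigns u and v the same color. Let G_1 be any graph, and let G_2 be obtained from G_1 by replacing each edge xy of G_1 by a fresh copy of R whose vertex u is identified with x, together with a new edge joining the copy's vertex v to y (the original edge xy is removed). Then G_2 is 3-colorable if and only if G_1 is 3-colorable; moreover, if R is triangle-free, then G_2 is triangle-free. -/
open SimpleGraph

/-- The graph obtained from a graph `G1` whose edges are oriented by the relation `D`
(so `x ~ y` in `G1` iff `D x y ∨ D y x`) by replacing each edge `xy` (with `D x y`)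
by a fresh copy of `R` whose vertex `u` is identified with `x`, together with a new
edge joining the copy's vertex `v` to `y`; the original edges of `G1` are removed. -/
def hajosExpand {V1 VR : Type*} (D : V1 → V1 → Prop)
    (R : SimpleGraph VR) (u v : VR) :
    SimpleGraph (V1 ⊕ ({e : V1 × V1 // D e.1 e.2} × {w : VR // w ≠ u})) :=
  SimpleGraph.fromRel (fun a b =>
    match a, b with
    | Sum.inl x, Sum.inr (e, w) => ((e : V1 × V1).1 = x ∧ R.Adj u (w : VR)) ∨
        ((e : V1 × V1).2 = x ∧ (w : VR) = v)
    | Sum.inr (e, w), Sum.inr (e', w') => e = e' ∧ R.Adj (w : VR) (w' : VR)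
    | _, _ => False)

/-!
A proper coloring of the expansion restricts, on the copy of `R` for an edge `xy` (with `x` in
the role of `u`), to a coloring of `R`; so `x` gets the color of the copy's `v`, which differs
from that of `y`. Conversely, a coloring `c` of `G1` extends by coloring each copy with a fixed
coloring of `R` composed with a transposition giving `u` the color `c x`; then `v` also gets
`c x ≠ c y`. A triangle contains at most one vertex of `G1` and otherwise lies in one copy; a
vertex `x` of `G1` adjacent to two vertices of the copy for `xy` sees both through `u`, as the
orientation is loopless, so every triangle comes from a triangle of `R`.
-/

section

variable {V1 VR : Type*} {D : V1 → V1 → Prop} {R : SimpleGraph VR} {u v : VR}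

theorem hajosExpand_not_adj_inl_inl {x y : V1} :
    ¬ (hajosExpand D R u v).Adj (Sum.inl x) (Sum.inl y) := by
  simp [hajosExpand]

theorem hajosExpand_adj_inl_inr {x : V1} {e : {e : V1 × V1 // D e.1 e.2}}
    {w : {w : VR // w ≠ u}} :
    (hajosExpand D R u v).Adj (Sum.inl x) (Sum.inr (e, w)) ↔
      (e.1.1 = x ∧ R.Adj u w) ∨ (e.1.2 = x ∧ (w : VR) = v) := by
  simp [hajosExpand]

theorem hajosExpand_adj_inr_inr {e e' : {e : V1 × V1 // D e.1 e.2}}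
    {w w' : {w : VR // w ≠ u}} :
    (hajosExpand D R u v).Adj (Sum.inr (e, w)) (Sum.inr (e', w')) ↔
      e = e' ∧ R.Adj w w' := by
  constructor
  · rintro ⟨-, ⟨he, hw⟩ | ⟨he, hw⟩⟩
    · exact ⟨he, hw⟩
    · exact ⟨he.symm, hw.symm⟩
  · rintro ⟨rfl, hw⟩
    refine ⟨fun h => ?_, Or.inl ⟨rfl, hw⟩⟩
    obtain rfl : w = w' := by simpa using h
    exact R.loopless.irrefl _ hw

namespace hajosExpand

variable {α : Type*}

open Classical in
noncomputable def copyColoring (C : (hajosExpand D R u v).Coloring α)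
    (e : {e : V1 × V1 // D e.1 e.2}) : R.Coloring α :=
  Coloring.mk
    (fun w => if h : w = u then C (Sum.inl e.1.1) else C (Sum.inr (e, ⟨w, h⟩)))
    (by
      intro a b hab
      by_cases ha : a = u <;> by_cases hb : b = u
      · subst ha hb
        exact absurd hab (R.loopless.irrefl _)
      · subst ha
        simpa [hb] using
          C.valid ((hajosExpand_adj_inl_inr (w := ⟨b, hb⟩)).2 (.inl ⟨rfl, hab⟩))
      · subst hb
        simpa [ha] using
          (C.valid ((hajosExpand_adj_inl_inr (w := ⟨a, ha⟩)).2 (.inl ⟨rfl, hab.symm⟩))).symm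
      · simpa [ha, hb] using
          C.valid
            ((hajosExpand_adj_inr_inr (w := ⟨a, ha⟩) (w' := ⟨b, hb⟩)).2 ⟨rfl, hab⟩))

theorem coloring_inl_ne (huv : u ≠ v) (hforce : ∀ CR : R.Coloring α, CR u = CR v)
    (C : (hajosExpand D R u v).Coloring α) (e : {e : V1 × V1 // D e.1 e.2}) :
    C (Sum.inl e.1.1) ≠ C (Sum.inl e.1.2) := by
  have hvu : v ≠ u := huv.symm
  have hcopy : C (Sum.inl e.1.1) = C (Sum.inr (e, ⟨v, hvu⟩)) := by
    simpa [copyColoring, Coloring.mk, hvu] using hforce (copyColoring C e)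
  rw [hcopy]
  exact C.valid (hajosExpand_adj_inl_inr.2 (Or.inr ⟨rfl, rfl⟩)) |>.symm

def baseColoring {G1 : SimpleGraph V1} (hD : ∀ x y, G1.Adj x y → D x y ∨ D y x)
    (huv : u ≠ v) (hforce : ∀ CR : R.Coloring α, CR u = CR v)
    (C : (hajosExpand D R u v).Coloring α) : G1.Coloring α :=
  Coloring.mk (fun x => C (Sum.inl x)) (by
    intro x y hxy
    rcases hD x y hxy with h | h
    · exact coloring_inl_ne huv hforce C ⟨(x, y), h⟩
    · exact (coloring_inl_ne huv hforce C ⟨(y, x), h⟩).symm)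

def extendColoring [DecidableEq α] {G1 : SimpleGraph V1} (hD : ∀ x y, D x y → G1.Adj x y)
    (c : G1.Coloring α) (CR : R.Coloring α) (hCR : CR u = CR v) :
    (hajosExpand D R u v).Coloring α := by
  let σ : {e : V1 × V1 // D e.1 e.2} → Equiv.Perm α := fun e => Equiv.swap (CR u) (c e.1.1)
  have inl_inr : ∀ x e w, (hajosExpand D R u v).Adj (Sum.inl x) (Sum.inr (e, w)) →
      c x ≠ σ e (CR w) := by
    intro x e w hadj
    rcases hajosExpand_adj_inl_inr.1 hadj with ⟨rfl, hw⟩ | ⟨rfl, hw⟩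
    · simpa [σ] using (σ e).injective.ne (CR.valid hw)
    · rw [hw, ← hCR, Equiv.swap_apply_left]
      exact (c.valid (hD _ _ e.2)).symm
  refine Coloring.mk (Sum.elim c fun p => σ p.1 (CR p.2)) ?_
  rintro (x | ⟨e, w⟩) (y | ⟨e', w'⟩) hadj
  · exact absurd hadj hajosExpand_not_adj_inl_inl
  · exact inl_inr x e' w' hadj
  · exact (inl_inr y e w hadj.symm).symm
  · obtain ⟨rfl, hw⟩ := hajosExpand_adj_inr_inr.1 hadj
    exact (σ e).injective.ne (CR.valid hw)

end hajosExpand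

theorem hajosExpand_not_adj_of_common_inl_neighbor (hR : R.CliqueFree 3) (hD : ∀ x, ¬ D x x)
    {x : V1} {e : {e : V1 × V1 // D e.1 e.2}} {w w' : {w : VR // w ≠ u}}
    (hw : (hajosExpand D R u v).Adj (Sum.inl x) (Sum.inr (e, w)))
    (hw' : (hajosExpand D R u v).Adj (Sum.inl x) (Sum.inr (e, w'))) : ¬ R.Adj w w' := by
  classical
  intro hww'
  rcases hajosExpand_adj_inl_inr.1 hw with ⟨he, huw⟩ | ⟨he, rfl⟩ <;>
    rcases hajosExpand_adj_inl_inr.1 hw' with ⟨he', huw'⟩ | ⟨he', hw'v⟩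
  · exact hR {u, (w : VR), (w' : VR)} (is3Clique_triple_iff.2 ⟨huw, huw', hww'⟩)
  · have he2 := e.2
    rw [he, he'] at he2
    exact hD x he2
  · have he2 := e.2
    rw [he, he'] at he2
    exact hD x he2
  · exact R.loopless.irrefl _ (hw'v ▸ hww')

theorem hajosExpand_cliqueFree_three (hR : R.CliqueFree 3) (hD : ∀ x, ¬ D x x) :
    (hajosExpand D R u v).CliqueFree 3 := by
  classical
  intro t ht
  obtain ⟨a, b, c, hab, hac, hbc, rfl⟩ := is3Clique_iff.1 ht
  rcases a with x | ⟨e, w⟩ <;> rcases b with y | ⟨e', w'⟩ <;>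
    rcases c with z | ⟨e'', w''⟩
  · exact hajosExpand_not_adj_inl_inl hab
  · exact hajosExpand_not_adj_inl_inl hab
  · exact hajosExpand_not_adj_inl_inl hac
  · obtain ⟨rfl, hw⟩ := hajosExpand_adj_inr_inr.1 hbc
    exact hajosExpand_not_adj_of_common_inl_neighbor hR hD hab hac hw
  · exact hajosExpand_not_adj_inl_inl hbc
  · obtain ⟨rfl, hw⟩ := hajosExpand_adj_inr_inr.1 hac
    exact hajosExpand_not_adj_of_common_inl_neighbor hR hD hab.symm hbc hw
  · obtain ⟨rfl, hw⟩ := hajosExpand_adj_inr_inr.1 hab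
    exact hajosExpand_not_adj_of_common_inl_neighbor hR hD hac.symm hbc.symm hw
  · obtain ⟨rfl, h₁⟩ := hajosExpand_adj_inr_inr.1 hab
    obtain ⟨rfl, h₂⟩ := hajosExpand_adj_inr_inr.1 hac
    obtain ⟨-, h₃⟩ := hajosExpand_adj_inr_inr.1 hbc
    exact hR {(w : VR), (w' : VR), (w'' : VR)} (is3Clique_triple_iff.2 ⟨h₁, h₂, h₃⟩)

end

theorem hajosExpand_colorable_iff_general {V1 VR : Type} (G1 : SimpleGraph V1)
    (R : SimpleGraph VR) (u v : VR) (huv : u ≠ v)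
    (hRcol : R.Colorable 3)
    (hforce : ∀ C : R.Coloring (Fin 3), C u = C v)
    (D : V1 → V1 → Prop)
    (hD : ∀ x y, G1.Adj x y ↔ D x y ∨ D y x)
    (hD' : ∀ x y, D x y → ¬ D y x) :
    ((hajosExpand D R u v).Colorable 3 ↔ G1.Colorable 3) ∧
    (R.CliqueFree 3 → (hajosExpand D R u v).CliqueFree 3) := by
  refine ⟨⟨fun ⟨C⟩ => ?_, fun ⟨c⟩ => ?_⟩, fun hR => ?_⟩
  · exact ⟨hajosExpand.baseColoring (fun x y => (hD x y).1) huv hforce C⟩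
  · obtain ⟨CR⟩ := hRcol
    exact ⟨hajosExpand.extendColoring (fun x y h => (hD x y).2 (.inl h)) c CR (hforce CR)⟩
  · exact hajosExpand_cliqueFree_three hR fun x hx => hD' x x hx hx

theorem hajosExpand_colorable_iff {V1 VR : Type} (G1 : SimpleGraph V1)
    (R : SimpleGraph VR) (u v : VR) (huv : u ≠ v) (hnadj : ¬ R.Adj u v)
    (hRcol : R.Colorable 3)
    (hforce : ∀ C : R.Coloring (Fin 3), C u = C v)
    (D : V1 → V1 → Prop)
    (hD : ∀ x y, G1.Adj x y ↔ D x y ∨ D y x)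
    (hD' : ∀ x y, D x y → ¬ D y x) :
    ((hajosExpand D R u v).Colorable 3 ↔ G1.Colorable 3) ∧
    (R.CliqueFree 3 → (hajosExpand D R u v).CliqueFree 3) :=
  hajosExpand_colorable_iff_general G1 R u v huv hRcol hforce D hD hD'
end

section
/- Let a ≤ b be positive integers and let G be a graph containing no K_{a,b} subgraph. Let A be a set of vertices of G. Then the number of vertices of V(G) ∖ A having at least a neighbors in A is at most C(|A|, a) · (b − 1), where C(n, k) denotes the binomial coefficient. -/
open SimpleGraph Finset

/-- `G` contains the complete bipartite graph `K_{a,b}` as a subgraph. -/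
def HasKab {V : Type*} (G : SimpleGraph V) (a b : ℕ) : Prop :=
  ∃ A B : Finset V, Disjoint A B ∧ A.card = a ∧ B.card = b ∧
    ∀ x ∈ A, ∀ y ∈ B, G.Adj x y

/-! Each vertex outside `A` with at least `a` neighbours in `A` is joined to all of some `a`-subset
`S` of `A`. For a fixed `S`, at least `b` such vertices would form a copy of `K_{a,b}` with `S`, so
there are at most `b - 1` of them; summing over the `C(|A|, a)` choices of `S` gives the bound. -/

section

variable {V : Type*} {G : SimpleGraph V} {a b : ℕ}

lemma card_lt_of_not_hasKab (hfree : ¬ HasKab G a b) {S T : Finset V} (hST : Disjoint S T)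
    (hS : S.card = a) (hadj : ∀ x ∈ S, ∀ y ∈ T, G.Adj x y) : T.card < b := by
  by_contra! hT
  obtain ⟨B, hBT, hB⟩ := exists_subset_card_eq hT
  exact hfree ⟨S, B, hST.mono_right hBT, hS, hB, fun x hx y hy => hadj x hx y (hBT hy)⟩

variable [Fintype V] [DecidableEq V] [DecidableRel G.Adj]

lemma card_filter_notMem_subset_adj_le (hfree : ¬ HasKab G a b) {A S : Finset V}
    (hSA : S ⊆ A) (hS : S.card = a) :
    (univ.filter fun v => v ∉ A ∧ S ⊆ A.filter (G.Adj v)).card ≤ b - 1 := by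
  have hlt := card_lt_of_not_hasKab hfree
    (T := univ.filter fun v => v ∉ A ∧ S ⊆ A.filter (G.Adj v))
    (disjoint_left.2 fun x hx hxT => (mem_filter.1 hxT).2.1 (hSA hx)) hS
    fun x hx y hy => (mem_filter.1 ((mem_filter.1 hy).2.2 hx)).2.symm
  omega

lemma filter_many_adj_subset_biUnion (A : Finset V) (a : ℕ) :
    (univ.filter fun v => v ∉ A ∧ a ≤ (A.filter (G.Adj v)).card) ⊆
      (A.powersetCard a).biUnion fun S => univ.filter fun v => v ∉ A ∧ S ⊆ A.filter (G.Adj v) := by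
  intro v hv
  obtain ⟨hvA, hdeg⟩ := (mem_filter.1 hv).2
  obtain ⟨S, hS, hSa⟩ := exists_subset_card_eq hdeg
  exact mem_biUnion.2 ⟨S, mem_powersetCard.2 ⟨hS.trans (filter_subset _ _), hSa⟩,
    mem_filter.2 ⟨mem_univ v, hvA, hS⟩⟩

end

theorem count_vertices_many_neighbors_general {V : Type} [Fintype V] [DecidableEq V]
    (G : SimpleGraph V) [DecidableRel G.Adj]
    (a b : ℕ) (hfree : ¬ HasKab G a b)
    (A : Finset V) :
    (Finset.univ.filter
        (fun v => v ∉ A ∧ a ≤ (A.filter (fun y => G.Adj v y)).card)).card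
      ≤ A.card.choose a * (b - 1) := by
  calc _ ≤ _ := card_le_card (filter_many_adj_subset_biUnion A a)
    _ ≤ (A.powersetCard a).card * (b - 1) := card_biUnion_le_card_mul _ _ _ fun S hS =>
        card_filter_notMem_subset_adj_le hfree (mem_powersetCard.1 hS).1 (mem_powersetCard.1 hS).2
    _ = A.card.choose a * (b - 1) := by rw [card_powersetCard]

theorem count_vertices_many_neighbors {V : Type} [Fintype V] [DecidableEq V]
    (G : SimpleGraph V) [DecidableRel G.Adj]
    (a b : ℕ) (ha : 0 < a) (hab : a ≤ b) (hfree : ¬ HasKab G a b)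
    (A : Finset V) :
    (Finset.univ.filter
        (fun v => v ∉ A ∧ a ≤ (A.filter (fun y => G.Adj v y)).card)).card
      ≤ A.card.choose a * (b - 1) :=
  count_vertices_many_neighbors_general G a b hfree A
end
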